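/- arXiv:math/0607610 — 2 statements merged into one kernel-verified Lean document; each statement's English description precedes it below -/
import Mathlib

section
/- Let H₂ : 𝔻 → ℂ be continuous on the closed unit disk, holomorphic on the interior, with |H₂(z)| = 1 for all |z| = 1 and |H₂(z)| ≤ 1 on 𝔻, and suppose the restriction of H₂ to the unit circle has winding number 0 as a map S¹ → S¹. Then H₂ is constant. -/
/-!
Suppose `H₂` had a zero. All zeros lie in some disk `|z| < r` with `r < 1`; choose a circle
`|z| = s` with `r < s < 1` so close to the unit circle that `H₂` on it is uniformly within
distance `1` of its unimodular boundary values `exp (i θ)`. Then `H₂` has a continuous logarithm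
`i θ + log (H₂ / exp (i θ))` along this circle, which is `2π`-periodic because `θ` is, so
`∮ H₂' / H₂ = 0`. On the other hand, dividing out the zeros inside the circle one at a time shows
that this integral is `2πi` times the number of zeros counted with multiplicity, a contradiction.
So `H₂` has no zeros, and the maximum modulus principle for `H₂` and `1 / H₂` gives `|H₂| = 1`
on the disk; a holomorphic function of constant modulus is constant.
-/

open Complex Metric Set Filter Topology
open scoped Real

theorem HasDerivAt.of_cexp {M : ℝ → ℂ} {t : ℝ} {e : ℂ} (hM : ContinuousAt M t)
    (h : HasDerivAt (fun u => cexp (M u)) e t) : HasDerivAt M (e / cexp (M t)) t := by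
  have hlocal : (fun u => M t + Complex.log (cexp (M u) / cexp (M t))) =ᶠ[𝓝 t] M := by
    filter_upwards [hM.eventually (ball_mem_nhds (M t) Real.pi_pos)] with u hu
    have him := abs_lt.1 ((abs_im_le_norm _).trans_lt (mem_ball_iff_norm.1 hu))
    rw [← exp_sub, log_exp (by linarith) (by linarith), add_sub_cancel]
  have hone : cexp (M t) / cexp (M t) = 1 := div_self (exp_ne_zero _)
  have hlog := ((h.div_const (cexp (M t))).clog_real (by simp)).const_add (M t)
  simpa [hone] using hlog.congr_of_eventuallyEq hlocal.symm

theorem intervalIntegral.integral_div_eq_sub_of_cexp_eq {ψ ψ' M : ℝ → ℂ}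
    (hψ : ∀ t, HasDerivAt ψ (ψ' t) t) (hψ' : Continuous ψ') (hM : Continuous M)
    (hexp : ∀ t, cexp (M t) = ψ t) (a b : ℝ) :
    ∫ t in a..b, ψ' t / ψ t = M b - M a := by
  have hψM : (fun t => cexp (M t)) = ψ := funext hexp
  refine integral_eq_sub_of_hasDerivAt (fun t _ => ?_) ?_
  · rw [← hexp t]
    exact HasDerivAt.of_cexp hM.continuousAt (hψM ▸ hψ t)
  · refine (hψ'.div (hψM ▸ hM.cexp) fun t => ?_).intervalIntegrable a b
    exact hexp t ▸ exp_ne_zero _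

theorem circleIntegral_logDeriv_eq_sub_of_cexp_eq {f : ℂ → ℂ} {U : Set ℂ} {c : ℂ} {R : ℝ}
    (hU : IsOpen U) (hf : DifferentiableOn ℂ f U) (hRU : sphere c |R| ⊆ U) {M : ℝ → ℂ}
    (hM : Continuous M) (hexp : ∀ t, cexp (M t) = f (circleMap c R t)) :
    ∮ z in C(c, R), logDeriv f z = M (2 * π) - M 0 := by
  have hmem : ∀ t, circleMap c R t ∈ U := fun t => hRU (circleMap_mem_sphere' c R t)
  have hderiv : ∀ t, HasDerivAt (fun u => f (circleMap c R u))
      (deriv f (circleMap c R t) * (circleMap 0 R t * I)) t := fun t =>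
    (hf.differentiableAt (hU.mem_nhds (hmem t))).hasDerivAt.comp t (hasDerivAt_circleMap c R t)
  have hcont : Continuous fun t => deriv f (circleMap c R t) * (circleMap 0 R t * I) :=
    ((hf.analyticOnNhd hU).deriv.continuousOn.comp_continuous (continuous_circleMap c R)
      hmem).mul ((continuous_circleMap 0 R).mul continuous_const)
  rw [← intervalIntegral.integral_div_eq_sub_of_cexp_eq hderiv hcont hM hexp]
  simp only [circleIntegral, deriv_circleMap, logDeriv_apply, smul_eq_mul]
  congr 1
  ext t
  ring

theorem AnalyticOnNhd.inter_preimage_zero_finite {𝕜 E : Type*} [NontriviallyNormedField 𝕜]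
    [NormedAddCommGroup E] [NormedSpace 𝕜 E] {f : 𝕜 → E} {U K : Set 𝕜} (hf : AnalyticOnNhd 𝕜 f U)
    (hU : IsPreconnected U) (hK : IsCompact K) (hKU : K ⊆ U) {w : 𝕜} (hw : w ∈ U)
    (hfw : f w ≠ 0) : (K ∩ f ⁻¹' {0}).Finite := by
  by_contra hinf
  obtain ⟨x, hxK, hacc⟩ := Set.Infinite.exists_accPt_of_subset_isCompact hinf hK inter_subset_left
  have hfreq : ∃ᶠ z in 𝓝[≠] x, f z = 0 := by
    rw [accPt_iff_frequently] at hacc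
    rw [frequently_nhdsWithin_iff]
    exact hacc.mono fun y hy => ⟨hy.2.2, hy.1⟩
  exact hfw (hf.eqOn_zero_of_preconnected_of_frequently_eq_zero hU (hKU hxK) hfreq hw)

section ArgumentPrinciple

variable {f g : ℂ → ℂ} {c z₀ : ℂ} {R s : ℝ}

theorem DifferentiableOn.exists_pow_mul_of_apply_eq_zero {U : Set ℂ}
    (hf : DifferentiableOn ℂ f U) (hU : U ∈ 𝓝 z₀) (hz₀ : f z₀ = 0)
    (hnz : ¬∀ᶠ z in 𝓝 z₀, f z = 0) :
    ∃ n ≠ 0, ∃ g : ℂ → ℂ, DifferentiableOn ℂ g U ∧ g z₀ ≠ 0 ∧ ∀ z, f z = (z - z₀) ^ n * g z := by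
  obtain ⟨p, hp⟩ := hf.analyticAt hU
  have hp0 : p ≠ 0 := fun h => hnz (hp.locally_zero_iff.mpr h)
  have hg : ∀ n, DifferentiableOn ℂ ((Function.swap dslope z₀)^[n] f) U := by
    intro n
    induction n with
    | zero => exact hf
    | succ n ih =>
      rw [Function.iterate_succ_apply']
      exact (differentiableOn_dslope hU).mpr ih
  refine ⟨p.order, fun h => ?_, _, hg _, hp.iterate_dslope_fslope_ne_zero hp0,
    hp.eq_pow_order_mul_iterate_dslope⟩
  exact hp.iterate_dslope_fslope_ne_zero hp0 (by simpa [h] using hz₀)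

theorem DifferentiableOn.logDeriv {U : Set ℂ} (hU : IsOpen U)
    (hf : DifferentiableOn ℂ f U) : DifferentiableOn ℂ (logDeriv f) {z ∈ U | f z ≠ 0} :=
  fun z hz => (((hf.analyticOnNhd hU).deriv z hz.1).differentiableAt.div
    (hf.differentiableAt (hU.mem_nhds hz.1)) hz.2).differentiableWithinAt

theorem circleIntegral_logDeriv_eq_zero_of_ne_zero (hf : DifferentiableOn ℂ f (ball c R))
    (hs : s < R) (hs0 : 0 ≤ s) (hne : ∀ z ∈ closedBall c s, f z ≠ 0) :
    ∮ z in C(c, s), logDeriv f z = 0 :=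
  DiffContOnCl.circleIntegral_eq_zero hs0 <| DifferentiableOn.diffContOnCl <|
    (hf.logDeriv isOpen_ball).mono fun z hz =>
      ⟨closedBall_subset_ball hs (closure_ball_subset_closedBall hz),
        hne z (closure_ball_subset_closedBall hz)⟩

theorem circleIntegral_logDeriv_pow_mul (hg : DifferentiableOn ℂ g (ball c R)) (hs : s < R)
    (hz₀ : z₀ ∈ ball c s) (hne : ∀ z ∈ sphere c s, g z ≠ 0) (n : ℕ) :
    ∮ z in C(c, s), logDeriv (fun z => (z - z₀) ^ n * g z) z
      = 2 * π * I * n + ∮ z in C(c, s), logDeriv g z := by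
  have hs0 : 0 ≤ s := (pos_of_mem_ball hz₀).le
  have hsR : sphere c s ⊆ ball c R := sphere_subset_ball hs
  have hz : ∀ z ∈ sphere c s, z - z₀ ≠ 0 := by
    rintro z hz h
    rw [sub_eq_zero.1 h, mem_sphere] at hz
    exact (mem_ball.1 hz₀).ne hz
  have hpt : EqOn (logDeriv fun z => (z - z₀) ^ n * g z)
      (fun z => n * (z - z₀)⁻¹ + logDeriv g z) (sphere c s) := by
    intro z hzs
    have hlin : DifferentiableAt ℂ (fun z => z - z₀) z := differentiableAt_id.sub_const z₀
    rw [logDeriv_mul (f := fun z => (z - z₀) ^ n) z (pow_ne_zero n (hz z hzs)) (hne z hzs)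
      (hlin.pow n) (hg.differentiableAt (isOpen_ball.mem_nhds (hsR hzs))), logDeriv_fun_pow hlin,
      logDeriv_apply, deriv_sub_const, deriv_id'', div_eq_mul_inv, one_mul]
  have hpole : CircleIntegrable (fun z => (n : ℂ) * (z - z₀)⁻¹) c s :=
    (continuousOn_const.mul ((continuousOn_id.sub continuousOn_const).inv₀ hz)).circleIntegrable hs0
  have hlog : CircleIntegrable (logDeriv g) c s :=
    ((hg.logDeriv isOpen_ball).continuousOn.mono fun z hz =>
      ⟨hsR hz, hne z hz⟩).circleIntegrable hs0
  rw [circleIntegral.integral_congr hs0 hpt, circleIntegral.integral_add hpole hlog,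
    circleIntegral.integral_const_mul, circleIntegral.integral_sub_inv_of_mem_ball hz₀]
  ring

theorem exists_nat_circleIntegral_logDeriv_eq (hf : DifferentiableOn ℂ f (ball c R))
    (hs0 : 0 < s) (hs : s < R) (hne : ∀ z ∈ sphere c s, f z ≠ 0) :
    ∃ m : ℕ, ∮ z in C(c, s), logDeriv f z = 2 * π * I * m ∧ ∀ z ∈ ball c s, f z = 0 → m ≠ 0 := by
  have hw : circleMap c s 0 ∈ sphere c s := circleMap_mem_sphere c hs0.le 0
  obtain ⟨N, hN⟩ : ∃ N, (closedBall c s ∩ f ⁻¹' {0}).ncard = N := ⟨_, rfl⟩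
  induction N using Nat.strong_induction_on generalizing f with
  | _ N ih =>
    by_cases hzero : ∃ z₀ ∈ ball c s, f z₀ = 0
    swap
    · push Not at hzero
      refine ⟨0, ?_, fun z hz h => absurd h (hzero z hz)⟩
      rw [circleIntegral_logDeriv_eq_zero_of_ne_zero hf hs hs0.le, Nat.cast_zero, mul_zero]
      rw [← ball_union_sphere]
      rintro z (hz | hz)
      exacts [hzero z hz, hne z hz]
    obtain ⟨z₀, hz₀, hfz₀⟩ := hzero
    have hfa := hf.analyticOnNhd isOpen_ball
    have hz₀R : z₀ ∈ ball c R := ball_subset_ball hs.le hz₀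
    have hnz : ¬∀ᶠ z in 𝓝 z₀, f z = 0 := fun h => hne _ hw <|
      hfa.eqOn_zero_of_preconnected_of_eventuallyEq_zero (convex_ball c R).isPreconnected hz₀R h
        (sphere_subset_ball hs hw)
    obtain ⟨n, hn, g, hg, hgz₀, hfg⟩ :=
      hf.exists_pow_mul_of_apply_eq_zero (isOpen_ball.mem_nhds hz₀R) hfz₀ hnz
    have hgne : ∀ z ∈ sphere c s, g z ≠ 0 := fun z hz h => hne z hz (by rw [hfg, h, mul_zero])
    have hfinite : (closedBall c s ∩ f ⁻¹' {0}).Finite :=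
      hfa.inter_preimage_zero_finite (convex_ball c R).isPreconnected (isCompact_closedBall c s)
        (closedBall_subset_ball hs) (sphere_subset_ball hs hw) (hne _ hw)
    have hfewer : (closedBall c s ∩ g ⁻¹' {0}).ncard < N := by
      refine hN ▸ ncard_lt_ncard ⟨fun z ⟨hz, h⟩ => ⟨hz, ?_⟩, fun hsub => ?_⟩ hfinite
      · simp only [mem_preimage, mem_singleton_iff] at h ⊢
        rw [hfg, h, mul_zero]
      · exact hgz₀ (hsub ⟨ball_subset_closedBall hz₀, hfz₀⟩).2
    obtain ⟨m, hm, -⟩ := ih _ hfewer hg hgne rfl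
    refine ⟨n + m, ?_, fun _ _ _ => by omega⟩
    rw [funext hfg, circleIntegral_logDeriv_pow_mul hg hs hz₀ hgne, hm]
    push_cast
    ring

theorem circleIntegral_logDeriv_ne_zero (hf : DifferentiableOn ℂ f (ball c R)) (hs : s < R)
    (hne : ∀ z ∈ sphere c s, f z ≠ 0) (hz₀ : z₀ ∈ ball c s) (hfz₀ : f z₀ = 0) :
    ∮ z in C(c, s), logDeriv f z ≠ 0 := by
  obtain ⟨m, hm, hm0⟩ := exists_nat_circleIntegral_logDeriv_eq hf (pos_of_mem_ball hz₀) hs hne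
  rw [hm]
  exact mul_ne_zero (by simp [Real.pi_ne_zero]) (Nat.cast_ne_zero.2 (hm0 z₀ hz₀ hfz₀))

end ArgumentPrinciple

theorem eventually_circleIntegral_logDeriv_eq_zero {f : ℂ → ℂ}
    (hc : ContinuousOn f (closedBall 0 1)) (hd : DifferentiableOn ℂ f (ball 0 1))
    {θ : ℝ → ℝ} (hθ : Continuous θ) (hlift : ∀ φ : ℝ, f (cexp (φ * I)) = cexp (θ φ * I))
    (hdeg : θ (2 * π) = θ 0) :
    ∀ᶠ s in 𝓝[<] 1, ∮ z in C(0, s), logDeriv f z = 0 := by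
  obtain ⟨δ, hδ, hclose⟩ := Metric.uniformContinuousOn_iff.1
    ((isCompact_closedBall 0 1).uniformContinuousOn_of_continuous hc) 1 one_pos
  filter_upwards [Ioo_mem_nhdsLT (max_lt (by linarith : 1 - δ < 1) one_pos)] with s hs
  obtain ⟨hsδ, hs0⟩ := max_lt_iff.1 hs.1
  have hsphere : sphere (0 : ℂ) |s| ⊆ ball 0 1 :=
    sphere_subset_ball (by rw [abs_of_pos hs0]; exact hs.2)
  set ψ : ℝ → ℂ := fun t => f (circleMap 0 s t)
  set e : ℝ → ℂ := fun t => cexp (θ t * I)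
  have hψe : ∀ t, ‖ψ t / e t - 1‖ < 1 := by
    intro t
    have hdist : dist (circleMap 0 s t) (cexp (t * I)) < δ := by
      rw [dist_eq_norm, circleMap_zero, ← sub_one_mul, norm_mul, norm_exp_ofReal_mul_I, mul_one,
        ← ofReal_one, ← ofReal_sub, norm_real, Real.norm_of_nonpos (by linarith [hs.2])]
      linarith
    have hnear := hclose _ (ball_subset_closedBall (hsphere (circleMap_mem_sphere' 0 s t))) _
      (by simp [norm_exp_ofReal_mul_I]) hdist
    rw [hlift, dist_eq_norm] at hnear
    rwa [div_sub_one (exp_ne_zero _), norm_div, norm_exp_ofReal_mul_I, div_one]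
  have hslit : ∀ t, ψ t / e t ∈ slitPlane := fun t => by
    simpa using mem_slitPlane_of_norm_lt_one (hψe t)
  refine (circleIntegral_logDeriv_eq_sub_of_cexp_eq isOpen_ball hd hsphere
    (M := fun t => θ t * I + log (ψ t / e t)) ?_ fun t => ?_).trans ?_
  · have hψ : Continuous ψ := hc.comp_continuous (continuous_circleMap 0 s) fun t =>
      ball_subset_closedBall (hsphere (circleMap_mem_sphere' 0 s t))
    have he : Continuous e := by fun_prop
    exact (by fun_prop : Continuous fun t => (θ t : ℂ) * I).add
      ((hψ.div he fun t => exp_ne_zero _).clog hslit)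
  · rw [exp_add, exp_log (slitPlane_ne_zero (hslit t)), mul_div_cancel₀ _ (exp_ne_zero _)]
  · simp [ψ, e, hdeg, (periodic_circleMap 0 s).eq]

theorem norm_eq_one_of_norm_frontier_eq_one {f : ℂ → ℂ} {U : Set ℂ}
    (hU : Bornology.IsBounded U) (hf : DiffContOnCl ℂ f U) (h1 : ∀ z ∈ frontier U, ‖f z‖ = 1)
    (h0 : ∀ z ∈ closure U, f z ≠ 0) {z : ℂ} (hz : z ∈ closure U) : ‖f z‖ = 1 := by
  have hle := Complex.norm_le_of_forall_mem_frontier_norm_le hU hf (fun w hw => (h1 w hw).le) hz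
  have hinv := Complex.norm_le_of_forall_mem_frontier_norm_le hU (hf.inv h0) (C := 1)
    (fun w hw => by simp [h1 w hw]) hz
  rw [Pi.inv_apply, norm_inv, inv_le_one₀ (norm_pos_iff.2 (h0 z hz))] at hinv
  exact le_antisymm hle hinv

theorem eqOn_closure_of_norm_frontier_eq_one {f : ℂ → ℂ} {U : Set ℂ} {c : ℂ}
    (hU : Bornology.IsBounded U) (hUo : IsOpen U) (hUc : IsPreconnected U) (hc : c ∈ U)
    (hf : DiffContOnCl ℂ f U) (h1 : ∀ z ∈ frontier U, ‖f z‖ = 1)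
    (h0 : ∀ z ∈ closure U, f z ≠ 0) : EqOn f (Function.const ℂ (f c)) (closure U) :=
  Complex.eqOn_closure_of_isPreconnected_of_isMaxOn_norm hUc hUo hf hc fun z hz => by
    show ‖f z‖ ≤ ‖f c‖
    rw [norm_eq_one_of_norm_frontier_eq_one hU hf h1 h0 (subset_closure hz),
      norm_eq_one_of_norm_frontier_eq_one hU hf h1 h0 (subset_closure hc)]

theorem constant_of_winding_zero_general
    (H₂ : ℂ → ℂ)
    (hc : ContinuousOn H₂ (Metric.closedBall 0 1))
    (hd : DifferentiableOn ℂ H₂ (Metric.ball 0 1))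
    (hb : ∀ z : ℂ, ‖z‖ = 1 → ‖H₂ z‖ = 1)
    (θ : ℝ → ℝ) (hθ : Continuous θ)
    (hlift : ∀ φ : ℝ, H₂ (Complex.exp (φ * Complex.I)) = Complex.exp (θ φ * Complex.I))
    (hdeg : θ (2 * Real.pi) = θ 0) :
    ∃ c : ℂ, ∀ z : ℂ, ‖z‖ ≤ 1 → H₂ z = c := by
  by_cases hzero : ∃ z ∈ closedBall (0 : ℂ) 1, H₂ z = 0
  · exfalso
    obtain ⟨z₀, hz₀, hH₂z₀⟩ := hzero
    have hzeros : closedBall 0 1 ∩ H₂ ⁻¹' {0} ⊆ ball (0 : ℂ) 1 := fun z ⟨hz, h⟩ =>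
      mem_ball_zero_iff.2 <| (mem_closedBall_zero_iff.1 hz).lt_of_ne fun h1 => by
        simpa [show H₂ z = 0 from h] using hb z h1
    obtain ⟨r, hr, hr_zeros⟩ := exists_lt_subset_ball
      (hc.preimage_isClosed_of_isClosed isClosed_closedBall isClosed_singleton) hzeros
    obtain ⟨s, hint, hrs, hs1⟩ :=
      ((eventually_circleIntegral_logDeriv_eq_zero hc hd hθ hlift hdeg).and
        (Ioo_mem_nhdsLT hr)).exists
    refine circleIntegral_logDeriv_ne_zero hd hs1 (fun z hz h => ?_)
      (ball_subset_ball hrs.le (hr_zeros ⟨hz₀, hH₂z₀⟩)) hH₂z₀ hint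
    have hzr := hr_zeros
      ⟨sphere_subset_closedBall.trans (closedBall_subset_closedBall hs1.le) hz, h⟩
    linarith [mem_ball.1 hzr, mem_sphere.1 hz]
  · push Not at hzero
    have hdisk : DiffContOnCl ℂ H₂ (ball 0 1) := ⟨hd, by rwa [closure_ball 0 one_ne_zero]⟩
    refine ⟨H₂ 0, fun z hz => eqOn_closure_of_norm_frontier_eq_one isBounded_ball isOpen_ball
      (convex_ball 0 1).isPreconnected (mem_ball_self one_pos) hdisk ?_ ?_ ?_⟩
    · rw [frontier_ball 0 one_ne_zero]
      exact fun w hw => hb w (mem_sphere_zero_iff_norm.1 hw)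
    · rw [closure_ball 0 one_ne_zero]
      exact hzero
    · rwa [closure_ball 0 one_ne_zero, mem_closedBall_zero_iff]

/-- A map `H₂` on the closed unit disk, continuous there, holomorphic inside,
with `|H₂| = 1` on the unit circle and `|H₂| ≤ 1` on the disk, whose boundary
restriction has winding number `0` (expressed via a continuous angular lift `θ`
with `θ (2π) = θ 0`), is constant. -/
theorem constant_of_winding_zero
    (H₂ : ℂ → ℂ)
    (hc : ContinuousOn H₂ (Metric.closedBall 0 1))
    (hd : DifferentiableOn ℂ H₂ (Metric.ball 0 1))
    (hb : ∀ z : ℂ, ‖z‖ = 1 → ‖H₂ z‖ = 1)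
    (hle : ∀ z : ℂ, ‖z‖ ≤ 1 → ‖H₂ z‖ ≤ 1)
    (θ : ℝ → ℝ) (hθ : Continuous θ)
    (hlift : ∀ φ : ℝ, H₂ (Complex.exp (φ * Complex.I)) = Complex.exp (θ φ * Complex.I))
    (hdeg : θ (2 * Real.pi) = θ 0) :
    ∃ c : ℂ, ∀ z : ℂ, ‖z‖ ≤ 1 → H₂ z = c :=
  constant_of_winding_zero_general H₂ hc hd hb θ hθ hlift hdeg
end

section
/- Index count for the Bishop family: let z₂(e^{iφ}) = e^{iφ}·(const); then the space of pairs (ż₁, ż₂), with ż₁ : 𝔻 → ℂ holomorphic, Im ż₁ = 0 on ∂𝔻 and Re ż₁|_{∂𝔻} = ¼(z₂ conj(ż₂) + conj(z₂) ż₂), together with ż₂ : 𝔻 → ℂ holomorphic, has real dimension exactly 4: the solutions are ż₂(z) = a₀ + a₁ z − conj(a₀) z² (a₀, a₁ ∈ ℂ) with ż₁ the corresponding real constant, and the solution set is parametrized bijectively by (a₀, a₁) ∈ ℂ² ≅ ℝ⁴. -/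
open Metric Set

/-- A function continuous on the closed unit disk, holomorphic inside, whose real part is
constant on the boundary circle, is constant. -/
lemma bishop_aux_const_of_re_boundary {f : ℂ → ℂ} {k : ℝ}
    (hc : ContinuousOn f (Metric.closedBall 0 1))
    (hd : DifferentiableOn ℂ f (Metric.ball 0 1))
    (hb : ∀ z ∈ Metric.sphere (0:ℂ) 1, (f z).re = k) :
    ∀ z ∈ Metric.closedBall (0:ℂ) 1, f z = f 0 := by
  have hcl : closure (Metric.ball (0:ℂ) 1) = Metric.closedBall 0 1 :=
    closure_ball (0:ℂ) one_ne_zero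
  have hfr : frontier (Metric.ball (0:ℂ) 1) = Metric.sphere (0:ℂ) 1 :=
    frontier_ball (0:ℂ) one_ne_zero
  have key : ∀ (g : ℂ → ℂ) (m : ℝ), ContinuousOn g (Metric.closedBall 0 1) →
      DifferentiableOn ℂ g (Metric.ball 0 1) →
      (∀ z ∈ Metric.sphere (0:ℂ) 1, (g z).re ≤ m) →
      ∀ z ∈ Metric.closedBall (0:ℂ) 1, (g z).re ≤ m := by
    intro g m hgc hgd hgb z hz
    have hdc : DiffContOnCl ℂ (fun w => Complex.exp (g w)) (Metric.ball 0 1) :=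
      ⟨hgd.cexp, by rw [hcl]; exact hgc.cexp⟩
    have hnorm : ‖Complex.exp (g z)‖ ≤ Real.exp m := by
      refine Complex.norm_le_of_forall_mem_frontier_norm_le isBounded_ball hdc ?_ ?_
      · intro w hw
        rw [hfr] at hw
        simpa [Complex.norm_exp] using Real.exp_le_exp.2 (hgb w hw)
      · rw [hcl]; exact hz
    have : Real.exp (g z).re ≤ Real.exp m := by
      simpa [Complex.norm_exp] using hnorm
    exact Real.exp_le_exp.1 this
  have hre : ∀ z ∈ Metric.closedBall (0:ℂ) 1, (f z).re = k := by
    intro z hz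
    have h1 := key f k hc hd (fun w hw => le_of_eq (hb w hw)) z hz
    have h2 := key (fun w => -f w) (-k) hc.neg hd.neg
      (fun w hw => by simp [hb w hw]) z hz
    simp only [Complex.neg_re, neg_le_neg_iff] at h2
    linarith
  -- `exp ∘ f` has constant norm on the ball, hence is constant there
  have hmax : IsMaxOn (norm ∘ fun w => Complex.exp (f w)) (Metric.ball 0 1) 0 := by
    intro w hw
    have : Real.exp (f w).re ≤ Real.exp (f 0).re := by
      rw [hre w (ball_subset_closedBall hw), hre 0 (by simp)]
    simpa [Function.comp, Complex.norm_exp] using this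
  have hconst := Complex.eqOn_of_isPreconnected_of_isMaxOn_norm
    (convex_ball (0:ℂ) 1).isPreconnected Metric.isOpen_ball hd.cexp
    (mem_ball_self one_pos) hmax
  have hder : ∀ z ∈ Metric.ball (0:ℂ) 1, fderivWithin ℂ f (Metric.ball 0 1) z = 0 := by
    intro z hz
    have hfz : DifferentiableAt ℂ f z :=
      hd.differentiableAt (Metric.isOpen_ball.mem_nhds hz)
    have h1 : HasDerivAt (fun w => Complex.exp (f w)) (Complex.exp (f z) * deriv f z) z :=
      hfz.hasDerivAt.cexp
    have h2 : HasDerivAt (fun w => Complex.exp (f w)) 0 z := by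
      have hev : (fun w => Complex.exp (f w)) =ᶠ[nhds z]
          (fun _ => Complex.exp (f 0)) := by
        filter_upwards [Metric.isOpen_ball.mem_nhds hz] with w hw using hconst hw
      exact (hasDerivAt_const z (Complex.exp (f 0))).congr_of_eventuallyEq hev
    have h3 : Complex.exp (f z) * deriv f z = 0 := h1.unique h2
    have hdz : deriv f z = 0 :=
      (mul_eq_zero.1 h3).resolve_left (Complex.exp_ne_zero _)
    have h0 : HasFDerivAt f (0 : ℂ →L[ℂ] ℂ) z := by
      have h4 := hfz.hasDerivAt
      rw [hdz] at h4
      have h5 := h4.hasFDerivAt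
      have : ContinuousLinearMap.toSpanSingleton ℂ (0 : ℂ) = 0 := by
        ext1; simp
      rwa [this] at h5
    exact h0.hasFDerivWithinAt.fderivWithin (Metric.isOpen_ball.uniqueDiffWithinAt hz)
  have hball : Set.EqOn f (fun _ => f 0) (Metric.ball 0 1) := fun z hz =>
    (convex_ball (0:ℂ) 1).is_const_of_fderivWithin_eq_zero hd hder hz (mem_ball_self one_pos)
  exact Set.EqOn.of_subset_closure hball hc continuousOn_const
    ball_subset_closedBall (by rw [hcl])

open Metric Set


/-- Index count for the Bishop family in the local model (with `z₂(z) = 2√t₀ z`):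
the pairs `(zd1, zd2)` of functions continuous on the closed unit disk and
holomorphic inside, satisfying the linearized boundary conditions
`Im zd1 = 0` and `zd1 = ¼(z₂ conj(zd2) + conj(z₂) zd2)` on the unit circle, are
exactly those of the form `zd2(z) = a₀ + a₁ z − conj(a₀) z²` with `zd1` the real
constant `√t₀ · Re a₁`; the parametrization by `(a₀, a₁) ∈ ℂ² ≅ ℝ⁴` is unique,
so the solution space has real dimension 4. -/
theorem bishop_family_linearized_solutions
    (t₀ : ℝ) (ht₀ : 0 < t₀) (zd1 zd2 : ℂ → ℂ) :
    (ContinuousOn zd1 (Metric.closedBall 0 1) ∧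
      DifferentiableOn ℂ zd1 (Metric.ball 0 1) ∧
      ContinuousOn zd2 (Metric.closedBall 0 1) ∧
      DifferentiableOn ℂ zd2 (Metric.ball 0 1) ∧
      (∀ φ : ℝ, (zd1 (Complex.exp ((φ : ℂ) * Complex.I))).im = 0) ∧
      (∀ φ : ℝ, zd1 (Complex.exp ((φ : ℂ) * Complex.I))
        = (1 / 4) *
            (((2 * Real.sqrt t₀ : ℝ) : ℂ) * Complex.exp ((φ : ℂ) * Complex.I)
                * (starRingEnd ℂ) (zd2 (Complex.exp ((φ : ℂ) * Complex.I)))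
              + (starRingEnd ℂ) (((2 * Real.sqrt t₀ : ℝ) : ℂ)
                  * Complex.exp ((φ : ℂ) * Complex.I))
                * zd2 (Complex.exp ((φ : ℂ) * Complex.I)))))
    ↔ ∃! a : ℂ × ℂ, ∀ z ∈ Metric.closedBall (0 : ℂ) 1,
        zd2 z = a.1 + a.2 * z - (starRingEnd ℂ) a.1 * z ^ 2 ∧
          zd1 z = ((Real.sqrt t₀ * a.2.re : ℝ) : ℂ) := by
  set s : ℝ := Real.sqrt t₀ with hs_def
  have hs : 0 < s := Real.sqrt_pos.2 ht₀
  have hsne : (s : ℂ) ≠ 0 := by exact_mod_cast hs.ne'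
  have hmemexp : ∀ φ : ℝ, Complex.exp ((φ : ℂ) * Complex.I) ∈ Metric.closedBall (0:ℂ) 1 := by
    intro φ
    rw [mem_closedBall_zero_iff]
    simp [Complex.norm_exp_ofReal_mul_I]
  have hsph : ∀ z ∈ Metric.sphere (0:ℂ) 1, ∃ φ : ℝ, z = Complex.exp ((φ : ℂ) * Complex.I) := by
    intro z hz
    refine ⟨Complex.arg z, ?_⟩
    have habs : ‖z‖ = 1 := by
      simpa using mem_sphere_zero_iff_norm.mp hz
    have h := Complex.norm_mul_exp_arg_mul_I z
    rw [habs] at h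
    simpa using h.symm
  constructor
  · rintro ⟨hc1, hd1, hc2, hd2, him, hbc⟩
    -- Step 1 : zd1 is a real constant
    have h1 : ∀ z ∈ Metric.closedBall (0:ℂ) 1, zd1 z = zd1 0 := by
      have := bishop_aux_const_of_re_boundary (f := fun z => -Complex.I * zd1 z) (k := 0)
        (continuousOn_const.mul hc1) (hd1.const_mul _) ?_
      · intro z hz
        have h := this z hz
        exact mul_left_cancel₀ (by simp [Complex.I_ne_zero] : -Complex.I ≠ 0) h
      · intro z hz
        obtain ⟨φ, rfl⟩ := hsph z hz
        simp [Complex.mul_re, him φ]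
    have him0 : (zd1 0).im = 0 := by
      have h0 := him 0
      have e1 : Complex.exp ((0:ℝ) * Complex.I) = 1 := by simp
      rw [e1] at h0
      rw [h1 1 (by simp)] at h0
      exact h0
    set c₁ : ℝ := (zd1 0).re with hc₁
    have hzd1 : ∀ z ∈ Metric.closedBall (0:ℂ) 1, zd1 z = (c₁ : ℂ) := by
      intro z hz
      rw [h1 z hz]
      exact Complex.ext (by simp [hc₁]) (by simp [him0])
    -- Step 2 : the auxiliary function H
    set a₀ : ℂ := zd2 0 with ha₀
    set H : ℂ → ℂ := fun z => dslope zd2 0 z + (starRingEnd ℂ) a₀ * z with hH_def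
    have hHval : ∀ z : ℂ, z ≠ 0 → H z = z⁻¹ * (zd2 z - a₀) + (starRingEnd ℂ) a₀ * z := by
      intro z hz0
      simp [hH_def, dslope_of_ne _ hz0, slope, smul_eq_mul, ha₀]
    have hHc : ContinuousOn H (Metric.closedBall 0 1) := by
      have hds : ContinuousOn (dslope zd2 0) (Metric.closedBall 0 1) := by
        intro z hz
        rcases eq_or_ne z 0 with rfl | hz0
        · exact (continuousAt_dslope_same.2
            (hd2.differentiableAt (Metric.isOpen_ball.mem_nhds (by simp)))).continuousWithinAt
        · exact (continuousWithinAt_dslope_of_ne hz0).2 (hc2 z hz)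
      exact hds.add (continuousOn_const.mul continuousOn_id)
    have hHd : DifferentiableOn ℂ H (Metric.ball 0 1) := by
      have hds : DifferentiableOn ℂ (dslope zd2 0) (Metric.ball 0 1) :=
        (Complex.differentiableOn_dslope (Metric.isOpen_ball.mem_nhds (by simp))).2 hd2
      exact hds.add (differentiableOn_id.const_mul _)
    have hHb : ∀ z ∈ Metric.sphere (0:ℂ) 1, (H z).re = c₁ / s := by
      intro z hz
      obtain ⟨φ, rfl⟩ := hsph z hz
      set u : ℂ := Complex.exp ((φ : ℂ) * Complex.I) with hu_def
      have hu0 : u ≠ 0 := Complex.exp_ne_zero _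
      have huv : u * (starRingEnd ℂ) u = 1 := by
        rw [← Complex.exp_conj, ← Complex.exp_add]
        have : (φ : ℂ) * Complex.I + (starRingEnd ℂ) ((φ : ℂ) * Complex.I) = 0 := by
          simp [map_mul, Complex.conj_ofReal, Complex.conj_I]
        rw [this, Complex.exp_zero]
      have huinv : u⁻¹ = (starRingEnd ℂ) u := inv_eq_of_mul_eq_one_right huv
      have hb := hbc φ
      rw [hzd1 u (hmemexp φ)] at hb
      push_cast at hb
      simp only [map_mul, map_ofNat, Complex.conj_ofReal] at hb
      have key : (s : ℂ) * (H u + (starRingEnd ℂ) (H u)) = 2 * (c₁ : ℂ) := by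
        rw [hHval u hu0, huinv]
        simp only [map_add, map_mul, map_sub, Complex.conj_conj]
        linear_combination (-2 : ℂ) * hb
      have key2 : s * (2 * (H u).re) = 2 * c₁ := by
        have := Complex.add_conj (H u)
        rw [this] at key
        exact_mod_cast key
      field_simp
      linarith
    have hH0 := bishop_aux_const_of_re_boundary hHc hHd hHb
    set a₁ : ℂ := H 0 with ha₁
    have hzd2 : ∀ z ∈ Metric.closedBall (0:ℂ) 1,
        zd2 z = a₀ + a₁ * z - (starRingEnd ℂ) a₀ * z ^ 2 := by
      intro z hz
      rcases eq_or_ne z 0 with rfl | hz0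
      · simp [ha₀]
      · have h := hH0 z hz
        rw [hHval z hz0] at h
        field_simp at h
        linear_combination h
    have hra : s * a₁.re = c₁ := by
      have h1m : (1 : ℂ) ∈ Metric.sphere (0:ℂ) 1 := by simp
      have h := hHb 1 h1m
      rw [hH0 1 (by simp)] at h
      field_simp at h
      linarith
    refine ⟨(a₀, a₁), fun z hz => ⟨hzd2 z hz, by rw [hzd1 z hz, hra]⟩, ?_⟩
    rintro ⟨b₀, b₁⟩ hbp
    have h0' := (hbp 0 (by simp)).1
    have h1' := (hbp 1 (by simp)).1
    have e0 := hzd2 0 (by simp)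
    have e1 := hzd2 1 (by simp)
    simp only [mul_zero, mul_one, zero_pow, one_pow, ne_eq, OfNat.ofNat_ne_zero,
      not_false_eq_true, mul_zero, add_zero, sub_zero, mul_one] at h0' h1' e0 e1
    have hb0 : b₀ = a₀ := by rw [ha₀]; exact h0'.symm
    have hb1 : b₁ = a₁ := by
      have hcb : (starRingEnd ℂ) b₀ = (starRingEnd ℂ) a₀ := by rw [hb0]
      rw [h1'] at e1
      linear_combination e1 - hb0 + hcb
    simp [hb0, hb1]
  · rintro ⟨⟨A, B⟩, hA, -⟩
    simp only at hA
    have hps : ∀ z ∈ Metric.closedBall (0:ℂ) 1,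
        zd2 z = A + B * z - (starRingEnd ℂ) A * z ^ 2 := fun z hz => (hA z hz).1
    have hcs : ∀ z ∈ Metric.closedBall (0:ℂ) 1, zd1 z = ((s * B.re : ℝ) : ℂ) :=
      fun z hz => (hA z hz).2
    refine ⟨continuousOn_const.congr hcs, ?_, ?_, ?_, ?_, ?_⟩
    · exact (differentiableOn_const _).congr
        (fun z hz => hcs z (ball_subset_closedBall hz))
    · refine ContinuousOn.congr ?_ hps
      exact (continuousOn_const.add (continuousOn_const.mul continuousOn_id)).sub
        (continuousOn_const.mul (continuousOn_id.pow 2))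
    · refine DifferentiableOn.congr ?_ (fun z hz => hps z (ball_subset_closedBall hz))
      exact ((differentiableOn_const _).add (differentiableOn_id.const_mul _)).sub
        ((differentiableOn_id.pow 2).const_mul _)
    · intro φ
      rw [hcs _ (hmemexp φ)]
      exact Complex.ofReal_im _
    · intro φ
      set u : ℂ := Complex.exp ((φ : ℂ) * Complex.I) with hu_def
      have huv : u * (starRingEnd ℂ) u = 1 := by
        rw [← Complex.exp_conj, ← Complex.exp_add]
        have : (φ : ℂ) * Complex.I + (starRingEnd ℂ) ((φ : ℂ) * Complex.I) = 0 := by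
          simp [map_mul, Complex.conj_ofReal, Complex.conj_I]
        rw [this, Complex.exp_zero]
      rw [hcs u (hmemexp φ), hps u (hmemexp φ)]
      have hBre : ((B.re : ℝ) : ℂ) = (B + (starRingEnd ℂ) B) / 2 := by
        rw [Complex.add_conj]; push_cast; ring
      push_cast
      rw [hBre]
      simp only [map_add, map_mul, map_sub, Complex.conj_conj, map_ofNat,
        Complex.conj_ofReal, map_pow]
      linear_combination (-(s : ℂ) / 2) *
        (B + (starRingEnd ℂ) B - u * (starRingEnd ℂ) A - A * (starRingEnd ℂ) u) * huv
end
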